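/- arXiv:2009.07921 — 3 statements merged into one kernel-verified Lean document; each statement's English description precedes it below -/
import Mathlib

section
/- Let V be an m-dimensional real vector space and A = (A_1,…,A_q) a q-tuple of endomorphisms of V with generalized Newton transformations (T_u)_{u∈ℕ^q}. Then for every multi-index u with |u| ≥ 1, the identity |u|·σ_u(A) = Σ_{α=1}^{q} tr(A_α ∘ T_{α_♭(u)}) holds, where α_♭(u) lowers the α-th entry of u by 1 (and T_v = 0 if v has a negative entry). -/
/-- The generalized elementary symmetric function `σ_u(A)` of a `q`-tuple
`A = (A_1, …, A_q)` of endomorphisms of the `m`-dimensional real vector space `ℝ^m`: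
the coefficient of `t^u = t_1^{u_1}⋯t_q^{u_q}` in `det(t_1•A_1 + ⋯ + t_q•A_q + id)`. -/
noncomputable def msigma {m q : ℕ} (A : Fin q → Matrix (Fin m) (Fin m) ℝ)
    (u : Fin q → ℕ) : ℝ :=
  MvPolynomial.coeff (Finsupp.equivFunOnFinite.symm u)
    (Matrix.det (1 + ∑ α, (MvPolynomial.X α : MvPolynomial (Fin q) ℝ) •
      (A α).map (MvPolynomial.C : ℝ → MvPolynomial (Fin q) ℝ)))

/-- Auxiliary (fuel-indexed) definition of the generalized Newton transformations. -/
noncomputable def gnewtonAux {m q : ℕ} (A : Fin q → Matrix (Fin m) (Fin m) ℝ) :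
    ℕ → (Fin q → ℕ) → Matrix (Fin m) (Fin m) ℝ
  | 0, _ => 1
  | (n+1), u => msigma A u • (1 : Matrix (Fin m) (Fin m) ℝ) -
      ∑ α, if u α = 0 then 0 else A α * gnewtonAux A n (Function.update u α (u α - 1))

/-- The generalized Newton transformations `T_u` of `A`, satisfying `T_0 = id` and
`T_u = σ_u(A)•id − Σ_α A_α ∘ T_{α_♭(u)}` (with `T_v = 0` when `v` has a negative entry,
encoded by the `if` guard). -/
noncomputable def gnewton {m q : ℕ} (A : Fin q → Matrix (Fin m) (Fin m) ℝ)
    (u : Fin q → ℕ) : Matrix (Fin m) (Fin m) ℝ :=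
  gnewtonAux A (∑ α, u α) u


open MvPolynomial Matrix Finset

section Helpers

variable {m q : ℕ}



lemma pderiv_prod {ι : Type*} [DecidableEq ι] (α : Fin q) (s : Finset ι)
    (f : ι → MvPolynomial (Fin q) ℝ) :
    pderiv α (∏ i ∈ s, f i) = ∑ i ∈ s, pderiv α (f i) * ∏ j ∈ s.erase i, f j := by
  induction s using Finset.induction_on with
  | empty => simp
  | @insert a s ha ih =>
    rw [Finset.prod_insert ha, pderiv_mul, ih, Finset.sum_insert ha, Finset.erase_insert ha,
      Finset.mul_sum]
    congr 1
    refine Finset.sum_congr rfl fun i hi => ?_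
    have hia : i ≠ a := fun h => ha (h ▸ hi)
    rw [Finset.erase_insert_of_ne hia.symm,
      Finset.prod_insert (fun h => ha (Finset.mem_of_mem_erase h))]
    ring

lemma jacobi (α : Fin q) (M : Matrix (Fin m) (Fin m) (MvPolynomial (Fin q) ℝ)) :
    pderiv α M.det = ∑ i, (M.updateCol i fun r => pderiv α (M r i)).det := by
  rw [det_apply, map_sum]
  have h1 : ∀ σ : Equiv.Perm (Fin m),
      pderiv α (Equiv.Perm.sign σ • ∏ i, M (σ i) i)
      = ∑ i, Equiv.Perm.sign σ •
          (pderiv α (M (σ i) i) * ∏ j ∈ univ.erase i, M (σ j) j) := by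
    intro σ
    rw [Units.smul_def, map_zsmul, pderiv_prod, Finset.smul_sum]
    simp [Units.smul_def]
  simp only [h1]
  rw [Finset.sum_comm]
  refine Finset.sum_congr rfl fun i _ => ?_
  rw [det_apply]
  refine Finset.sum_congr rfl fun σ _ => ?_
  congr 1
  rw [← Finset.mul_prod_erase univ _ (mem_univ i)]
  congr 1
  · simp [updateCol_apply]
  · exact Finset.prod_congr rfl fun j hj => by
      rw [updateCol_apply, if_neg (Finset.ne_of_mem_erase hj)]


lemma coeff_pderiv (α : Fin q) (d : Fin q →₀ ℕ) (p : MvPolynomial (Fin q) ℝ) :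
    coeff d (pderiv α p) = ((d α : ℝ) + 1) * coeff (d + Finsupp.single α 1) p := by
  induction p using MvPolynomial.induction_on' with
  | add p r hp hr => simp [map_add, mul_add, hp, hr]
  | monomial s a =>
    rw [pderiv_monomial, coeff_monomial, coeff_monomial]
    by_cases h : s = d + Finsupp.single α 1
    · have h1 : s - Finsupp.single α 1 = d := by
        ext β
        rw [h]
        simp [Finsupp.tsub_apply, Finsupp.add_apply]
      have h2 : s α = d α + 1 := by
        rw [h]; simp
      rw [if_pos h1, if_pos h, h2]
      push_cast
      ring
    · rw [if_neg h, mul_zero]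
      by_cases h1 : s - Finsupp.single α 1 = d
      · rw [if_pos h1]
        by_cases h2 : s α = 0
        · simp [h2]
        · exfalso
          apply h
          rw [← h1, tsub_add_cancel_of_le]
          exact Finsupp.single_le_iff.mpr (Nat.one_le_iff_ne_zero.mpr h2)
      · rw [if_neg h1]

-- expansion of det of updated column in terms of adjugate
lemma det_updateColumn_eq (M : Matrix (Fin m) (Fin m) (MvPolynomial (Fin q) ℝ)) (i : Fin m)
    (v : Fin m → MvPolynomial (Fin q) ℝ) :
    (M.updateCol i v).det = ∑ j, v j * adjugate M i j := by
  rw [← cramer_apply]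
  have hv : v = ∑ j, v j • (Pi.single j 1 : Fin m → MvPolynomial (Fin q) ℝ) := by
    ext k
    simp [Pi.single_apply]
  have hc : M.cramer v = ∑ j, v j • M.cramer (Pi.single j 1) := by
    conv_lhs => rw [hv]
    rw [map_sum]
    simp only [LinearMap.map_smul]
  rw [hc, Finset.sum_apply]
  refine Finset.sum_congr rfl fun j _ => ?_
  have hj : cramer M (Pi.single j 1) = adjugate Mᵀ j := by
    rw [adjugate_def, transpose_transpose]; rfl
  rw [Pi.smul_apply, hj, ← adjugate_transpose, transpose_apply, smul_eq_mul]


noncomputable def MM (A : Fin q → Matrix (Fin m) (Fin m) ℝ) :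
    Matrix (Fin m) (Fin m) (MvPolynomial (Fin q) ℝ) :=
  1 + ∑ α, (X α : MvPolynomial (Fin q) ℝ) • (A α).map C

lemma MM_apply (A : Fin q → Matrix (Fin m) (Fin m) ℝ) (r i : Fin m) :
    MM A r i = (if r = i then 1 else 0) + ∑ β, X β * C (A β r i) := by
  simp [MM, Matrix.add_apply, Matrix.sum_apply, Matrix.smul_apply, Matrix.map_apply,
    smul_eq_mul, Matrix.one_apply]

lemma pderiv_MM (A : Fin q → Matrix (Fin m) (Fin m) ℝ) (α : Fin q) (r i : Fin m) :
    pderiv α (MM A r i) = C (A α r i) := by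
  rw [MM_apply, map_add, map_sum]
  have h0 : pderiv α (if r = i then (1 : MvPolynomial (Fin q) ℝ) else 0) = 0 := by
    split <;> simp
  rw [h0, zero_add]
  have h1 : ∀ β : Fin q, pderiv α (X β * C (A β r i))
      = (if β = α then 1 else 0) * C (A β r i) := by
    intro β
    rw [pderiv_mul, pderiv_C, mul_zero, add_zero, pderiv_X, Pi.single_apply]
  simp only [h1, ite_mul, one_mul, zero_mul]
  simp

lemma pderiv_det_MM (A : Fin q → Matrix (Fin m) (Fin m) ℝ) (α : Fin q) :
    pderiv α (MM A).det = trace (adjugate (MM A) * (A α).map C) := by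
  rw [jacobi]
  have h1 : ∀ i, ((MM A).updateCol i fun r => pderiv α (MM A r i)).det
      = ∑ j, C (A α j i) * adjugate (MM A) i j := by
    intro i
    rw [det_updateColumn_eq]
    simp only [pderiv_MM]
  simp only [h1]
  rw [Matrix.trace]
  refine Finset.sum_congr rfl fun i _ => ?_
  rw [Matrix.diag_apply, Matrix.mul_apply]
  exact Finset.sum_congr rfl fun j _ => by rw [Matrix.map_apply, mul_comm]

lemma msigma_eq (A : Fin q → Matrix (Fin m) (Fin m) ℝ) (u : Fin q → ℕ) :
    msigma A u = coeff (Finsupp.equivFunOnFinite.symm u) (MM A).det := rfl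

noncomputable def Tc (A : Fin q → Matrix (Fin m) (Fin m) ℝ) (u : Fin q → ℕ) :
    Matrix (Fin m) (Fin m) ℝ :=
  (adjugate (MM A)).map (coeff (Finsupp.equivFunOnFinite.symm u))

lemma symm_apply (u : Fin q → ℕ) (β : Fin q) :
    (Finsupp.equivFunOnFinite.symm u) β = u β := rfl

lemma symm_tsub (u : Fin q → ℕ) (α : Fin q) (h : u α ≠ 0) :
    Finsupp.equivFunOnFinite.symm u - Finsupp.single α 1
      = Finsupp.equivFunOnFinite.symm (Function.update u α (u α - 1)) := by
  ext β
  rw [Finsupp.tsub_apply, symm_apply, symm_apply, Finsupp.single_apply,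
    Function.update_apply]
  by_cases hβ : β = α
  · subst hβ; simp
  · simp [hβ, Ne.symm hβ]

lemma symm_add (u : Fin q → ℕ) (α : Fin q) (h : u α ≠ 0) :
    Finsupp.equivFunOnFinite.symm (Function.update u α (u α - 1)) + Finsupp.single α 1
      = Finsupp.equivFunOnFinite.symm u := by
  ext β
  rw [Finsupp.add_apply, symm_apply, symm_apply, Finsupp.single_apply,
    Function.update_apply]
  by_cases hβ : β = α
  · subst hβ; simp; omega
  · simp [hβ, Ne.symm hβ]

lemma adj_rec (A : Fin q → Matrix (Fin m) (Fin m) ℝ) :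
    adjugate (MM A) = (MM A).det • (1 : Matrix (Fin m) (Fin m) (MvPolynomial (Fin q) ℝ))
      - ∑ α, (X α : MvPolynomial (Fin q) ℝ) • ((A α).map C * adjugate (MM A)) := by
  have h := mul_adjugate (MM A)
  rw [MM, add_mul, one_mul, Finset.sum_mul] at h
  simp only [smul_mul_assoc] at h
  exact eq_sub_of_add_eq h

lemma Tc_rec (A : Fin q → Matrix (Fin m) (Fin m) ℝ) (u : Fin q → ℕ) :
    Tc A u = msigma A u • (1 : Matrix (Fin m) (Fin m) ℝ) -
      ∑ α, if u α = 0 then 0 else A α * Tc A (Function.update u α (u α - 1)) := by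
  ext i j
  set d := Finsupp.equivFunOnFinite.symm u with hd
  rw [Tc, Matrix.map_apply]
  conv_lhs => rw [adj_rec]
  rw [Matrix.sub_apply, coeff_sub, Matrix.sub_apply]
  congr 1
  · rw [Matrix.smul_apply, Matrix.smul_apply, Matrix.one_apply, smul_eq_mul, mul_ite,
      mul_one, mul_zero, apply_ite (coeff d), ← msigma_eq, coeff_zero, Matrix.one_apply,
      smul_eq_mul, mul_ite, mul_one, mul_zero]
  · rw [Matrix.sum_apply, coeff_sum, Matrix.sum_apply]
    refine Finset.sum_congr rfl fun α _ => ?_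
    rw [Matrix.smul_apply, smul_eq_mul, coeff_X_mul']
    by_cases h : u α = 0
    · rw [if_neg, if_pos h, Matrix.zero_apply]
      simp [Finsupp.mem_support_iff, symm_apply, h, hd]
    · rw [if_pos, if_neg h, symm_tsub u α h]
      · rw [Matrix.mul_apply, Matrix.mul_apply, coeff_sum]
        refine Finset.sum_congr rfl fun k _ => ?_
        rw [Matrix.map_apply, coeff_C_mul, Tc, Matrix.map_apply]
      · simp [Finsupp.mem_support_iff, hd, symm_apply, h]

lemma gnewtonAux_eq (A : Fin q → Matrix (Fin m) (Fin m) ℝ) :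
    ∀ n (u : Fin q → ℕ), (∑ α, u α) = n → gnewtonAux A n u = Tc A u := by
  intro n
  induction n with
  | zero =>
    intro u hu
    have hu0 : u = 0 := by
      funext β
      have := Finset.sum_eq_zero_iff.mp hu β (mem_univ β)
      simpa using this
    subst hu0
    have h1 : (MM A).map (constantCoeff : MvPolynomial (Fin q) ℝ →+* ℝ) = 1 := by
      ext i j
      rw [Matrix.map_apply, MM_apply]
      simp [Matrix.one_apply, apply_ite (constantCoeff : MvPolynomial (Fin q) ℝ →+* ℝ)]
    have h2 : Tc A 0 = 1 := by
      have h3 := (constantCoeff : MvPolynomial (Fin q) ℝ →+* ℝ).map_adjugate (MM A)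
      rw [RingHom.mapMatrix_apply, RingHom.mapMatrix_apply, h1, adjugate_one] at h3
      rw [Tc, ← h3]
      ext i j
      rw [Matrix.map_apply, Matrix.map_apply]
      rw [show (Finsupp.equivFunOnFinite.symm (0 : Fin q → ℕ)) = 0 from by ext β; rfl]
      rw [constantCoeff_eq]
    rw [h2, gnewtonAux]
  | succ n ih =>
    intro u hu
    rw [gnewtonAux, Tc_rec]
    congr 1
    refine Finset.sum_congr rfl fun α _ => ?_
    by_cases h : u α = 0
    · rw [if_pos h, if_pos h]
    · have hsum : (∑ β, Function.update u α (u α - 1) β) = n := by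
        rw [Finset.sum_update_of_mem (mem_univ α), Finset.sdiff_singleton_eq_erase]
        rw [← Finset.add_sum_erase _ u (mem_univ α)] at hu
        omega
      rw [if_neg h, if_neg h, ih _ hsum]

end Helpers

/-- `|u|·σ_u(A) = Σ_α tr(A_α ∘ T_{α_♭(u)})`, where `T_v = 0` if `v` has a negative
entry (encoded by the `if` guard). -/
theorem sum_trace_gnewton {m q : ℕ} (A : Fin q → Matrix (Fin m) (Fin m) ℝ)
    (u : Fin q → ℕ) (hu : 1 ≤ ∑ α, u α) :
    ((∑ α, u α : ℕ) : ℝ) * msigma A u =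
      ∑ α, (if u α = 0 then 0 else
        (A α * gnewton A (Function.update u α (u α - 1))).trace) := by
  have key : ∀ α : Fin q, u α ≠ 0 →
      (A α * gnewton A (Function.update u α (u α - 1))).trace = (u α : ℝ) * msigma A u := by
    intro α h
    set u' := Function.update u α (u α - 1) with hu'
    set d' := Finsupp.equivFunOnFinite.symm u' with hd'
    have hg : gnewton A u' = Tc A u' := gnewtonAux_eq A _ _ rfl
    rw [hg]
    have h1 : (A α * Tc A u').trace = coeff d' (((A α).map C * adjugate (MM A)).trace) := by
      rw [Matrix.trace, Matrix.trace, coeff_sum]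
      refine Finset.sum_congr rfl fun i _ => ?_
      rw [Matrix.diag_apply, Matrix.diag_apply, Matrix.mul_apply, Matrix.mul_apply, coeff_sum]
      refine Finset.sum_congr rfl fun k _ => ?_
      rw [Matrix.map_apply, coeff_C_mul, Tc, Matrix.map_apply]
    rw [h1, Matrix.trace_mul_comm, ← pderiv_det_MM, coeff_pderiv, hd', symm_add u α h,
      ← msigma_eq]
    congr 1
    have h2 : u' α = u α - 1 := Function.update_self α (u α - 1) u
    have h3 : (u α - 1) + 1 = u α := Nat.succ_pred_eq_of_ne_zero h
    rw [symm_apply, h2]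
    exact_mod_cast congrArg (Nat.cast : ℕ → ℝ) h3
  rw [Nat.cast_sum, Finset.sum_mul]
  refine Finset.sum_congr rfl fun α _ => ?_
  by_cases h : u α = 0
  · rw [if_pos h, h]; simp
  · rw [if_neg h, key α h]
end

section
/- Let V be an m-dimensional real vector space, A = (A_1,…,A_q) a q-tuple of endomorphisms of V with generalized Newton transformations (T_u), and λ ∈ ℝ^q. Then for every multi-index u with |u| ≥ 1, Σ_{α,β} λ_β tr(A_α ∘ A_β ∘ T_{β_♭α_♭(u)}) = −⟨λ,u⟩·σ_u(A) + Σ_β λ_β tr(A_β)·σ_{β_♭(u)}(A), where ⟨λ,u⟩ = Σ_α λ_α u_α. -/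
open MvPolynomial Matrix Finset

section core


variable {S : Type*} [CommRing S] [Algebra ℝ S]

/-- Product rule for derivations over a Finset. -/
theorem derivation_finset_prod {ι : Type*} [DecidableEq ι] (d : Derivation ℝ S S)
    (s : Finset ι) (f : ι → S) :
    d (∏ i ∈ s, f i) = ∑ i ∈ s, d (f i) * ∏ j ∈ s.erase i, f j := by
  induction s using Finset.induction_on with
  | empty => simp
  | insert a s ha ih =>
    rw [Finset.prod_insert ha, Derivation.leibniz, smul_eq_mul, smul_eq_mul, ih,
      Finset.sum_insert ha, Finset.erase_insert ha]
    rw [Finset.mul_sum]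
    rw [add_comm]
    congr 1
    · ring
    · apply Finset.sum_congr rfl
      intro i hi
      rw [Finset.erase_insert_of_ne (by rintro rfl; exact ha hi), Finset.prod_insert
        (fun h => ha (Finset.mem_of_mem_erase h))]
      ring


theorem adjugate_eq_filter_sum {n : Type*} [DecidableEq n] [Fintype n]
    (M : Matrix n n S) (i k : n) :
    adjugate M i k = ∑ σ ∈ Finset.univ.filter (fun σ : Equiv.Perm n => σ i = k),
      ((Equiv.Perm.sign σ : ℤ) : S) * ∏ j ∈ Finset.univ.erase i, M (σ j) j := by
  rw [adjugate_apply, det_apply']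
  rw [← Finset.sum_filter_add_sum_filter_not Finset.univ (fun σ : Equiv.Perm n => σ i = k)]
  have h2 : ∀ σ ∈ Finset.univ.filter (fun σ : Equiv.Perm n => ¬ σ i = k),
      ((Equiv.Perm.sign σ : ℤ) : S) * ∏ j, (M.updateRow k (Pi.single i 1)) (σ j) j = 0 := by
    intro σ hσ
    rw [Finset.mem_filter] at hσ
    have hj0 : σ (σ.symm k) = k := σ.apply_symm_apply k
    have hz : (∏ j, (M.updateRow k (Pi.single i 1)) (σ j) j) = 0 := by
      refine Finset.prod_eq_zero (Finset.mem_univ (σ.symm k)) ?_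
      rw [hj0, Matrix.updateRow_self, Pi.single_eq_of_ne]
      intro h
      exact hσ.2 (by rw [← h, hj0])
    rw [hz, mul_zero]
  rw [Finset.sum_eq_zero h2, add_zero]
  apply Finset.sum_congr rfl
  intro σ hσ
  rw [Finset.mem_filter] at hσ
  congr 1
  rw [← Finset.mul_prod_erase Finset.univ _ (Finset.mem_univ i)]
  rw [show (M.updateRow k (Pi.single i 1)) (σ i) i = 1 by
    rw [hσ.2, Matrix.updateRow_self, Pi.single_eq_same]]
  rw [one_mul]
  apply Finset.prod_congr rfl
  intro j hj
  rw [Matrix.updateRow_ne]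
  intro h
  exact (Finset.mem_erase.mp hj).1 (σ.injective (by rw [h, hσ.2]))

theorem derivation_det {n : Type*} [DecidableEq n] [Fintype n] (d : Derivation ℝ S S)
    (M : Matrix n n S) :
    d M.det = ∑ i, ∑ k, d (M k i) * adjugate M i k := by
  rw [det_apply', map_sum]
  have key : ∀ σ : Equiv.Perm n, d (((Equiv.Perm.sign σ : ℤ) : S) * ∏ j, M (σ j) j) =
      ∑ i, ((Equiv.Perm.sign σ : ℤ) : S) *
        (d (M (σ i) i) * ∏ j ∈ Finset.univ.erase i, M (σ j) j) := by
    intro σ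
    rw [Derivation.leibniz, Derivation.map_intCast, smul_zero, add_zero, smul_eq_mul,
      derivation_finset_prod, Finset.mul_sum]
  rw [Finset.sum_congr rfl (fun σ _ => key σ), Finset.sum_comm]
  apply Finset.sum_congr rfl
  intro i _
  rw [show (∑ k, d (M k i) * adjugate M i k) =
      ∑ k, ∑ σ ∈ Finset.univ.filter (fun σ : Equiv.Perm n => σ i = k),
        ((Equiv.Perm.sign σ : ℤ) : S) *
          (d (M (σ i) i) * ∏ j ∈ Finset.univ.erase i, M (σ j) j) from ?_]
  · exact (Finset.sum_fiberwise Finset.univ (fun σ : Equiv.Perm n => σ i)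
      (fun σ => ((Equiv.Perm.sign σ : ℤ) : S) *
        (d (M (σ i) i) * ∏ j ∈ Finset.univ.erase i, M (σ j) j))).symm
  apply Finset.sum_congr rfl
  intro k _
  rw [adjugate_eq_filter_sum, Finset.mul_sum]
  apply Finset.sum_congr rfl
  intro σ hσ
  rw [Finset.mem_filter] at hσ
  rw [hσ.2]
  ring


namespace GNW

variable {q : ℕ}

noncomputable def e (u : Fin q → ℕ) : Fin q →₀ ℕ := Finsupp.equivFunOnFinite.symm u

@[simp] lemma e_apply (u : Fin q → ℕ) (β : Fin q) : e u β = u β := rfl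

lemma e_sub_single (u : Fin q → ℕ) (β : Fin q) (h : u β ≠ 0) :
    e u - Finsupp.single β 1 = e (Function.update u β (u β - 1)) := by
  ext γ
  simp only [Finsupp.coe_tsub, Pi.sub_apply, e_apply, Finsupp.single_apply]
  rcases eq_or_ne β γ with rfl | hne
  · simp [Function.update_self]
  · simp [Function.update_of_ne (Ne.symm hne), Finsupp.single_apply, hne]

lemma e_add_single (u : Fin q → ℕ) (β : Fin q) (h : u β ≠ 0) :
    e (Function.update u β (u β - 1)) + Finsupp.single β 1 = e u := by
  ext γ
  simp only [Finsupp.coe_add, Pi.add_apply, e_apply, Finsupp.single_apply]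
  rcases eq_or_ne β γ with rfl | hne
  · simp only [Function.update_self, if_pos rfl]
    rcases Nat.exists_eq_succ_of_ne_zero h with ⟨k, hk⟩
    simp [hk]
  · simp [Function.update_of_ne (Ne.symm hne), hne]

/-- Extracting `coeff (e u)` from `X β * p`. -/
lemma coeff_e_X_mul (u : Fin q → ℕ) (β : Fin q) (p : MvPolynomial (Fin q) ℝ) :
    MvPolynomial.coeff (e u) (X β * p) =
      if u β = 0 then 0 else
        MvPolynomial.coeff (e (Function.update u β (u β - 1))) p := by
  rw [MvPolynomial.coeff_X_mul']
  rcases eq_or_ne (u β) 0 with h | h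
  · rw [if_neg, if_pos h]
    simp [Finsupp.mem_support_iff, h]
  · rw [if_pos, if_neg h, e_sub_single u β h]
    simp [Finsupp.mem_support_iff, h]

/-- Coefficient of a partial derivative. -/
lemma coeff_pderiv (β : Fin q) (v : Fin q →₀ ℕ) (p : MvPolynomial (Fin q) ℝ) :
    MvPolynomial.coeff v (pderiv β p) =
      (v β + 1) * MvPolynomial.coeff (v + Finsupp.single β 1) p := by
  induction p using MvPolynomial.induction_on' with
  | monomial s a =>
    rw [pderiv_monomial, coeff_monomial, coeff_monomial]
    rcases eq_or_ne (s β) 0 with h | h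
    · have h1 : s - Finsupp.single β 1 = s := by
        ext γ
        simp only [Finsupp.coe_tsub, Pi.sub_apply, Finsupp.single_apply]
        rcases eq_or_ne β γ with rfl | hne
        · simp only [if_pos rfl, eq_self_iff_true, if_true]
          omega
        · simp [hne]
      have h2 : s ≠ v + Finsupp.single β 1 := by
        intro hs
        have := congrArg (fun f => f β) hs
        simp only [Finsupp.coe_add, Pi.add_apply, Finsupp.single_apply, eq_self_iff_true,
          if_true] at this
        omega
      rw [h1, if_neg h2, mul_zero, h]
      simp
    · have h1 : s - Finsupp.single β 1 = v ↔ s = v + Finsupp.single β 1 := by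
        constructor <;> intro hs
        · ext γ
          have hγ := congrArg (fun f => f γ) hs
          simp only [Finsupp.coe_tsub, Pi.sub_apply, Finsupp.coe_add, Pi.add_apply,
            Finsupp.single_apply] at hγ ⊢
          rcases eq_or_ne β γ with rfl | hne
          · simp only [eq_self_iff_true, if_true] at hγ ⊢; omega
          · simp only [if_neg hne] at hγ ⊢; omega
        · ext γ
          have hγ := congrArg (fun f => f γ) hs
          simp only [Finsupp.coe_tsub, Pi.sub_apply, Finsupp.coe_add, Pi.add_apply,
            Finsupp.single_apply] at hγ ⊢
          rcases eq_or_ne β γ with rfl | hne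
          · simp only [eq_self_iff_true, if_true] at hγ ⊢; omega
          · simp only [if_neg hne] at hγ ⊢; omega
      rcases eq_or_ne s (v + Finsupp.single β 1) with hs | hs
      · rw [if_pos (h1.mpr hs), if_pos hs]
        have hsb : s β = v β + 1 := by rw [hs]; simp
        rw [hsb]
        push_cast
        ring
      · rw [if_neg (fun hh => hs (h1.mp hh)), if_neg hs, mul_zero]
  | add p1 p2 ih1 ih2 =>
    rw [map_add, coeff_add, coeff_add, ih1, ih2, mul_add]

end GNW
end core

namespace GNW

open GNW

variable {m q : ℕ} (A : Fin q → Matrix (Fin m) (Fin m) ℝ)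

/-- The polynomial matrix `M = 1 + Σ_α t_α A_α`. -/
noncomputable def Mm : Matrix (Fin m) (Fin m) (MvPolynomial (Fin q) ℝ) :=
  1 + ∑ α, (MvPolynomial.X α : MvPolynomial (Fin q) ℝ) •
    (A α).map (MvPolynomial.C : ℝ → MvPolynomial (Fin q) ℝ)

/-- Coefficient extraction. -/
noncomputable def cf (u : Fin q → ℕ) (p : MvPolynomial (Fin q) ℝ) : ℝ :=
  MvPolynomial.coeff (e u) p

lemma msigma_eq (u : Fin q → ℕ) : msigma A u = cf u (Matrix.det (Mm A)) := rfl

lemma cf_matrix_mul_left (v : Fin q → ℕ) (B : Matrix (Fin m) (Fin m) ℝ)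
    (N : Matrix (Fin m) (Fin m) (MvPolynomial (Fin q) ℝ)) (i j : Fin m) :
    cf v ((B.map (MvPolynomial.C : ℝ → MvPolynomial (Fin q) ℝ) * N) i j) = (B * N.map (cf v)) i j := by
  simp only [Matrix.mul_apply, Matrix.map_apply, cf, MvPolynomial.coeff_sum,
    MvPolynomial.coeff_C_mul]

lemma cf_matrix_mul_right (v : Fin q → ℕ) (B : Matrix (Fin m) (Fin m) ℝ)
    (N : Matrix (Fin m) (Fin m) (MvPolynomial (Fin q) ℝ)) (i j : Fin m) :
    cf v ((N * B.map (MvPolynomial.C : ℝ → MvPolynomial (Fin q) ℝ)) i j) = (N.map (cf v) * B) i j := by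
  simp only [Matrix.mul_apply, Matrix.map_apply, cf, MvPolynomial.coeff_sum]
  congr 1
  ext k
  rw [mul_comm, MvPolynomial.coeff_C_mul, mul_comm]

/-- Left adjugate recurrence on coefficients. -/
lemma adj_cf_left (u : Fin q → ℕ) :
    (Matrix.adjugate (Mm A)).map (cf u) =
      msigma A u • (1 : Matrix (Fin m) (Fin m) ℝ) -
        ∑ α, (if u α = 0 then 0 else
          A α * (Matrix.adjugate (Mm A)).map (cf (Function.update u α (u α - 1)))) := by
  have hexp : Matrix.det (Mm A) • (1 : Matrix (Fin m) (Fin m) (MvPolynomial (Fin q) ℝ)) =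
      Matrix.adjugate (Mm A) + ∑ α, (MvPolynomial.X α : MvPolynomial (Fin q) ℝ) •
        ((A α).map (MvPolynomial.C : ℝ → MvPolynomial (Fin q) ℝ) * Matrix.adjugate (Mm A)) := by
    rw [← Matrix.mul_adjugate (Mm A), Mm, add_mul, one_mul, Finset.sum_mul]
    congr 1
    exact Finset.sum_congr rfl fun α _ => smul_mul_assoc _ _ _
  have hadj : Matrix.adjugate (Mm A) =
      Matrix.det (Mm A) • (1 : Matrix (Fin m) (Fin m) (MvPolynomial (Fin q) ℝ)) -
        ∑ α, (MvPolynomial.X α : MvPolynomial (Fin q) ℝ) •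
          ((A α).map (MvPolynomial.C : ℝ → MvPolynomial (Fin q) ℝ) * Matrix.adjugate (Mm A)) :=
    eq_sub_of_add_eq hexp.symm
  ext i j
  have step1 : (Matrix.adjugate (Mm A)).map (cf u) i j = cf u (Matrix.adjugate (Mm A) i j) := rfl
  rw [step1]
  conv_lhs => rw [hadj]
  rw [Matrix.sub_apply, Matrix.smul_apply, smul_eq_mul]
  rw [show cf u (Matrix.det (Mm A) * (1 : Matrix (Fin m) (Fin m) (MvPolynomial (Fin q) ℝ)) i j -
      (∑ α, (MvPolynomial.X α : MvPolynomial (Fin q) ℝ) •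
        ((A α).map (MvPolynomial.C : ℝ → MvPolynomial (Fin q) ℝ) * Matrix.adjugate (Mm A))) i j) =
      cf u (Matrix.det (Mm A) * (1 : Matrix (Fin m) (Fin m) (MvPolynomial (Fin q) ℝ)) i j) -
      cf u ((∑ α, (MvPolynomial.X α : MvPolynomial (Fin q) ℝ) •
        ((A α).map (MvPolynomial.C : ℝ → MvPolynomial (Fin q) ℝ) * Matrix.adjugate (Mm A))) i j)
    by simp only [cf, MvPolynomial.coeff_sub]]
  congr 1
  · rcases eq_or_ne i j with rfl | hij
    · simp only [Matrix.one_apply_eq, mul_one, Matrix.smul_apply, smul_eq_mul]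
      rw [msigma_eq]
    · simp [Matrix.one_apply_ne hij, cf, Matrix.smul_apply]
  · rw [Matrix.sum_apply]
    rw [show cf u (∑ α, ((MvPolynomial.X α : MvPolynomial (Fin q) ℝ) •
        ((A α).map (MvPolynomial.C : ℝ → MvPolynomial (Fin q) ℝ) * Matrix.adjugate (Mm A))) i j) =
        ∑ α, cf u (((MvPolynomial.X α : MvPolynomial (Fin q) ℝ) •
        ((A α).map (MvPolynomial.C : ℝ → MvPolynomial (Fin q) ℝ) * Matrix.adjugate (Mm A))) i j)
      by simp only [cf, MvPolynomial.coeff_sum]]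
    rw [Matrix.sum_apply]
    apply Finset.sum_congr rfl
    intro α _
    rw [Matrix.smul_apply, smul_eq_mul, cf, coeff_e_X_mul]
    rcases eq_or_ne (u α) 0 with h | h
    · simp [h]
    · rw [if_neg h, if_neg h]
      exact cf_matrix_mul_left _ _ _ _ _

/-- Right adjugate recurrence on coefficients. -/
lemma adj_cf_right (u : Fin q → ℕ) :
    (Matrix.adjugate (Mm A)).map (cf u) =
      msigma A u • (1 : Matrix (Fin m) (Fin m) ℝ) -
        ∑ α, (if u α = 0 then 0 else
          (Matrix.adjugate (Mm A)).map (cf (Function.update u α (u α - 1))) * A α) := by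
  have hexp : Matrix.det (Mm A) • (1 : Matrix (Fin m) (Fin m) (MvPolynomial (Fin q) ℝ)) =
      Matrix.adjugate (Mm A) + ∑ α, (MvPolynomial.X α : MvPolynomial (Fin q) ℝ) •
        (Matrix.adjugate (Mm A) * (A α).map (MvPolynomial.C : ℝ → MvPolynomial (Fin q) ℝ)) := by
    rw [← Matrix.adjugate_mul (Mm A), Mm, mul_add, mul_one, Finset.mul_sum]
    congr 1
    exact Finset.sum_congr rfl fun α _ => mul_smul_comm _ _ _
  have hadj : Matrix.adjugate (Mm A) =
      Matrix.det (Mm A) • (1 : Matrix (Fin m) (Fin m) (MvPolynomial (Fin q) ℝ)) -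
        ∑ α, (MvPolynomial.X α : MvPolynomial (Fin q) ℝ) •
          (Matrix.adjugate (Mm A) * (A α).map (MvPolynomial.C : ℝ → MvPolynomial (Fin q) ℝ)) :=
    eq_sub_of_add_eq hexp.symm
  ext i j
  have step1 : (Matrix.adjugate (Mm A)).map (cf u) i j = cf u (Matrix.adjugate (Mm A) i j) := rfl
  rw [step1]
  conv_lhs => rw [hadj]
  rw [Matrix.sub_apply, Matrix.smul_apply, smul_eq_mul]
  rw [show cf u (Matrix.det (Mm A) * (1 : Matrix (Fin m) (Fin m) (MvPolynomial (Fin q) ℝ)) i j -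
      (∑ α, (MvPolynomial.X α : MvPolynomial (Fin q) ℝ) •
        (Matrix.adjugate (Mm A) * (A α).map (MvPolynomial.C : ℝ → MvPolynomial (Fin q) ℝ))) i j) =
      cf u (Matrix.det (Mm A) * (1 : Matrix (Fin m) (Fin m) (MvPolynomial (Fin q) ℝ)) i j) -
      cf u ((∑ α, (MvPolynomial.X α : MvPolynomial (Fin q) ℝ) •
        (Matrix.adjugate (Mm A) * (A α).map (MvPolynomial.C : ℝ → MvPolynomial (Fin q) ℝ))) i j)
    by simp only [cf, MvPolynomial.coeff_sub]]
  congr 1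
  · rcases eq_or_ne i j with rfl | hij
    · simp only [Matrix.one_apply_eq, mul_one, Matrix.smul_apply, smul_eq_mul]
      rw [msigma_eq]
    · simp [Matrix.one_apply_ne hij, cf, Matrix.smul_apply]
  · rw [Matrix.sum_apply]
    rw [show cf u (∑ α, ((MvPolynomial.X α : MvPolynomial (Fin q) ℝ) •
        (Matrix.adjugate (Mm A) * (A α).map (MvPolynomial.C : ℝ → MvPolynomial (Fin q) ℝ))) i j) =
        ∑ α, cf u (((MvPolynomial.X α : MvPolynomial (Fin q) ℝ) •
        (Matrix.adjugate (Mm A) * (A α).map (MvPolynomial.C : ℝ → MvPolynomial (Fin q) ℝ))) i j)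
      by simp only [cf, MvPolynomial.coeff_sum]]
    rw [Matrix.sum_apply]
    apply Finset.sum_congr rfl
    intro α _
    rw [Matrix.smul_apply, smul_eq_mul, cf, coeff_e_X_mul]
    rcases eq_or_ne (u α) 0 with h | h
    · simp [h]
    · rw [if_neg h, if_neg h]
      exact cf_matrix_mul_right _ _ _ _ _

lemma sum_update (u : Fin q → ℕ) (α : Fin q) (h : u α ≠ 0) :
    ∑ γ, Function.update u α (u α - 1) γ = (∑ γ, u γ) - 1 := by
  rw [Finset.sum_update_of_mem (Finset.mem_univ α)]
  rw [show (∑ γ, u γ) = u α + ∑ γ ∈ Finset.univ \ {α}, u γ from ?_]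
  · omega
  · rw [Finset.sum_eq_sum_sdiff_singleton_add (Finset.mem_univ α)]
    ring

lemma cf_zero_adj :
    (Matrix.adjugate (Mm A)).map (cf (fun _ => 0)) = 1 := by
  have he : e (fun _ : Fin q => (0 : ℕ)) = 0 := by
    ext γ; rfl
  have hcf : (cf (fun _ : Fin q => 0) : MvPolynomial (Fin q) ℝ → ℝ) =
      ⇑(MvPolynomial.constantCoeff (σ := Fin q) (R := ℝ)) := by
    funext p
    rw [cf, he]
    rfl
  rw [hcf]
  have hmap : (Matrix.adjugate (Mm A)).map
      (⇑(MvPolynomial.constantCoeff (σ := Fin q) (R := ℝ))) =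
      Matrix.adjugate ((Mm A).map (⇑(MvPolynomial.constantCoeff (σ := Fin q) (R := ℝ)))) := by
    exact (MvPolynomial.constantCoeff (σ := Fin q) (R := ℝ)).map_adjugate (Mm A)
  rw [hmap]
  have h1 : (Mm A).map (⇑(MvPolynomial.constantCoeff (σ := Fin q) (R := ℝ))) = 1 := by
    ext i j
    simp only [Mm, Matrix.map_apply, Matrix.add_apply, Matrix.sum_apply, Matrix.smul_apply,
      smul_eq_mul, map_add, map_sum, _root_.map_mul, MvPolynomial.constantCoeff_X, zero_mul,
      Finset.sum_const_zero, add_zero]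
    rcases eq_or_ne i j with rfl | hij
    · simp [Matrix.one_apply_eq]
    · simp [Matrix.one_apply_ne hij]
  rw [h1, Matrix.adjugate_one]

lemma gnewtonAux_eq : ∀ (n : ℕ) (u : Fin q → ℕ), (∑ α, u α) ≤ n →
    gnewtonAux A n u = (Matrix.adjugate (Mm A)).map (cf u) := by
  intro n
  induction n with
  | zero =>
    intro u hu
    have hu0 : u = fun _ => 0 := by
      funext α
      have := Finset.single_le_sum (f := u) (fun β _ => Nat.zero_le (u β)) (Finset.mem_univ α)
      omega
    rw [hu0, cf_zero_adj]
    rfl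
  | succ n ih =>
    intro u hu
    show (msigma A u • (1 : Matrix (Fin m) (Fin m) ℝ) -
      ∑ α, if u α = 0 then 0 else A α * gnewtonAux A n (Function.update u α (u α - 1))) = _
    rw [adj_cf_left A u]
    congr 1
    apply Finset.sum_congr rfl
    intro α _
    rcases eq_or_ne (u α) 0 with h | h
    · rw [if_pos h, if_pos h]
    · rw [if_neg h, if_neg h, ih]
      rw [sum_update u α h]
      omega

/-- `gnewton` equals the coefficients of the adjugate. -/
lemma gnewton_eq (u : Fin q → ℕ) :
    gnewton A u = (Matrix.adjugate (Mm A)).map (cf u) :=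
  gnewtonAux_eq A (∑ α, u α) u le_rfl

/-- Key trace identity: `tr(A_β ∘ T_{β♭u}) = u_β σ_u`. -/
lemma trace_key (u : Fin q → ℕ) (β : Fin q) (h : u β ≠ 0) :
    (A β * (Matrix.adjugate (Mm A)).map (cf (Function.update u β (u β - 1)))).trace
      = (u β : ℝ) * msigma A u := by
  have pderiv_Mm : ∀ k i : Fin m, MvPolynomial.pderiv β (Mm A k i) =
      MvPolynomial.C (A β k i) := by
    intro k i
    have h0 : MvPolynomial.pderiv β
        ((1 : Matrix (Fin m) (Fin m) (MvPolynomial (Fin q) ℝ)) k i) = 0 := by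
      rcases eq_or_ne k i with rfl | hki
      · simp [Matrix.one_apply_eq]
      · simp [Matrix.one_apply_ne hki]
    simp only [Mm, Matrix.add_apply, Matrix.sum_apply, Matrix.smul_apply, smul_eq_mul,
      map_add, map_sum, h0, zero_add, Derivation.leibniz, Matrix.map_apply,
      MvPolynomial.pderiv_C, MvPolynomial.pderiv_X, smul_zero, smul_eq_mul]
    simp [Pi.single_apply, mul_ite, Finset.sum_ite_eq']
  set v := Function.update u β (u β - 1) with hv
  have hTr : (A β * (Matrix.adjugate (Mm A)).map (cf v)).trace
      = cf v (∑ i, ∑ k, MvPolynomial.C (A β i k) * Matrix.adjugate (Mm A) k i) := by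
    simp only [Matrix.trace, Matrix.diag, Matrix.mul_apply, Matrix.map_apply, cf,
      MvPolynomial.coeff_sum, MvPolynomial.coeff_C_mul]
  have hd := derivation_det (MvPolynomial.pderiv β) (Mm A)
  rw [Finset.sum_congr rfl (fun i _ => Finset.sum_congr rfl (fun k _ => by
    rw [pderiv_Mm k i])) ] at hd
  have hswap : (∑ i, ∑ k, MvPolynomial.C (A β i k) * Matrix.adjugate (Mm A) k i)
      = ∑ i, ∑ k, MvPolynomial.C (A β k i) * Matrix.adjugate (Mm A) i k := by
    rw [Finset.sum_comm]
  rw [hTr, hswap, ← hd]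
  rw [cf, coeff_pderiv]
  have h1 : e v + Finsupp.single β 1 = e u := e_add_single u β h
  have h2 : (e v) β = u β - 1 := by
    rw [e_apply, hv, Function.update_self]
  rw [h1, h2, msigma_eq, cf]
  congr 1
  have : u β - 1 + 1 = u β := by omega
  rw [show ((u β - 1 : ℕ) : ℝ) + 1 = ((u β - 1 + 1 : ℕ) : ℝ) by push_cast; ring, this]

end GNW


open GNW

/-- Weighted recurrence (Lemma 1):
`Σ_α,β λ_β tr(A_α ∘ A_β ∘ T_(β_♭α_♭(u))) = −⟨λ,u⟩·σ_u(A) + Σ_β λ_β tr(A_β)·σ_(β_♭(u))(A)`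
for `|u| ≥ 1`, where `⟨λ,u⟩ = Σ_α λ_α u_α` and terms with a negative entry vanish. -/
theorem gnewton_weighted_recurrence {m q : ℕ} (A : Fin q → Matrix (Fin m) (Fin m) ℝ)
    (lam : Fin q → ℝ) (u : Fin q → ℕ) (hu : 1 ≤ ∑ α, u α) :
    (∑ α, ∑ β, (if u α = 0 then 0 else
          if Function.update u α (u α - 1) β = 0 then 0 else
            lam β * (A α * A β * gnewton A
              (Function.update (Function.update u α (u α - 1)) β
                (Function.update u α (u α - 1) β - 1))).trace)) =
      -(∑ α, lam α * u α) * msigma A u +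
        ∑ β, (if u β = 0 then 0 else
          lam β * (A β).trace * msigma A (Function.update u β (u β - 1))) := by
  classical
  rw [Finset.sum_comm]
  -- Step 1: symmetrize each term
  have hterm : ∀ β α : Fin q, (if u α = 0 then 0 else
          if Function.update u α (u α - 1) β = 0 then 0 else
            lam β * (A α * A β * gnewton A
              (Function.update (Function.update u α (u α - 1)) β
                (Function.update u α (u α - 1) β - 1))).trace) =
      (if u β = 0 then 0 else
          if Function.update u β (u β - 1) α = 0 then 0 else
            lam β * (A β * (gnewton A
              (Function.update (Function.update u β (u β - 1)) α
                (Function.update u β (u β - 1) α - 1)) * A α)).trace) := by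
    intro β α
    rcases eq_or_ne α β with rfl | hab
    · rcases eq_or_ne (u α) 0 with h | h
      · simp [h]
      · rw [if_neg h, if_neg h]
        rcases eq_or_ne (Function.update u α (u α - 1) α) 0 with h2 | h2
        · rw [if_pos h2, if_pos h2]
        · rw [if_neg h2, if_neg h2]
          rw [mul_assoc, Matrix.trace_mul_comm, mul_assoc]
    · have hg1 : Function.update u α (u α - 1) β = u β :=
        Function.update_of_ne (Ne.symm hab) _ _
      have hg2 : Function.update u β (u β - 1) α = u α :=
        Function.update_of_ne hab _ _
      rw [hg1, hg2]
      rcases eq_or_ne (u α) 0 with h1 | h1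
      · rcases eq_or_ne (u β) 0 with h2 | h2 <;> simp [h1, h2]
      · rcases eq_or_ne (u β) 0 with h2 | h2
        · simp [h1, h2]
        · rw [if_neg h1, if_neg h2, if_neg h2, if_neg h1]
          have hidx : Function.update (Function.update u α (u α - 1)) β (u β - 1) =
              Function.update (Function.update u β (u β - 1)) α (u α - 1) :=
            Function.update_comm hab _ _ u
          rw [hidx, mul_assoc, Matrix.trace_mul_comm, mul_assoc]
  rw [Finset.sum_congr rfl (fun β _ => Finset.sum_congr rfl (fun α _ => hterm β α))]
  -- Step 2: evaluate the inner sum for each β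
  have hβ : ∀ β : Fin q, (∑ α, if u β = 0 then 0 else
          if Function.update u β (u β - 1) α = 0 then 0 else
            lam β * (A β * (gnewton A
              (Function.update (Function.update u β (u β - 1)) α
                (Function.update u β (u β - 1) α - 1)) * A α)).trace) =
      (if u β = 0 then 0 else
        lam β * ((A β).trace * msigma A (Function.update u β (u β - 1))
          - (u β : ℝ) * msigma A u)) := by
    intro β
    rcases eq_or_ne (u β) 0 with h | h
    · simp [h]
    · simp only [if_neg h]
      set w := Function.update u β (u β - 1) with hw
      have hpull : (∑ α, if w α = 0 then 0 else
            lam β * (A β * (gnewton A (Function.update w α (w α - 1)) * A α)).trace) =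
          lam β * (A β * (∑ α, if w α = 0 then 0 else
            gnewton A (Function.update w α (w α - 1)) * A α)).trace := by
        rw [Finset.mul_sum, Matrix.trace_sum, Finset.mul_sum]
        apply Finset.sum_congr rfl
        intro α _
        rcases eq_or_ne (w α) 0 with h2 | h2
        · simp [h2]
        · rw [if_neg h2, if_neg h2]
      rw [hpull]
      have hsum : (∑ α, if w α = 0 then 0 else
          gnewton A (Function.update w α (w α - 1)) * A α) =
          msigma A w • (1 : Matrix (Fin m) (Fin m) ℝ) -
            (Matrix.adjugate (Mm A)).map (cf w) := by
        rw [show (∑ α, if w α = 0 then 0 else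
            gnewton A (Function.update w α (w α - 1)) * A α) =
            ∑ α, (if w α = 0 then 0 else
              (Matrix.adjugate (Mm A)).map (cf (Function.update w α (w α - 1))) * A α) from
          Finset.sum_congr rfl (fun α _ => by
            rcases eq_or_ne (w α) 0 with h2 | h2
            · simp [h2]
            · rw [if_neg h2, if_neg h2, gnewton_eq])]
        have := adj_cf_right A w
        linear_combination (norm := abel) this
      rw [hsum, Matrix.mul_sub, Matrix.trace_sub, mul_smul_comm, mul_one,
        Matrix.trace_smul, smul_eq_mul]
      rw [← hw] at *
      rw [show (A β * (Matrix.adjugate (Mm A)).map (cf w)).trace = (u β : ℝ) * msigma A u from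
        GNW.trace_key A u β h]
      ring
  rw [Finset.sum_congr rfl (fun β _ => hβ β)]
  -- Step 3: final algebra
  rw [Finset.sum_congr rfl (fun β _ => show (if u β = 0 then 0 else
      lam β * ((A β).trace * msigma A (Function.update u β (u β - 1))
        - (u β : ℝ) * msigma A u)) =
      (if u β = 0 then 0 else
        lam β * (A β).trace * msigma A (Function.update u β (u β - 1)))
        - lam β * (u β : ℝ) * msigma A u from by
    rcases eq_or_ne (u β) 0 with h | h
    · simp [h]
    · rw [if_neg h, if_neg h]; ring)]
  rw [Finset.sum_sub_distrib]
  rw [show (∑ β, lam β * (u β : ℝ) * msigma A u) = (∑ α, lam α * (u α : ℝ)) * msigma A u from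
    (Finset.sum_mul _ _ _).symm]
  ring
end

section
/- Let V be an m-dimensional real vector space and A = (A_1,…,A_q) a q-tuple of endomorphisms of V. The generalized Newton transformations defined by T_u = Σ_{s=0}^{|u|} Σ_{i∈I(q,s)} (−1)^{‖i‖} σ_{u−|i|}(A) A^i satisfy both recursions T_u = σ_u·id_V − Σ_α A_α∘T_{α_♭(u)} and T_u = σ_u·id_V − Σ_α T_{α_♭(u)}∘A_α for all u with |u| ≥ 1. -/
/-- `σ_v(A)` for an integer multi-index `v`, vanishing when some entry is negative. -/
noncomputable def msigmaZ {m q : ℕ} (A : Fin q → Matrix (Fin m) (Fin m) ℝ)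
    (v : Fin q → ℤ) : ℝ :=
  if ∀ α, 0 ≤ v α then msigma A (fun α => (v α).toNat) else 0

/-- The row-sum vector `|i|` of the `0-1` matrix `i ∈ I(q,s)`, encoded as the function
`c : Fin s → Fin q` recording the position of the unique `1` in each column. -/
def rowCount {q s : ℕ} (c : Fin s → Fin q) (α : Fin q) : ℕ :=
  (Finset.univ.filter fun j => c j = α).card

/-- The generalized Newton transformations, defined by the explicit formula
`T_u = Σ_{s=0}^{|u|} Σ_{i∈I(q,s)} (−1)^{‖i‖} σ_{u−|i|}(A) A^i`, where a matrix
`i ∈ I(q,s)` is encoded by `c : Fin s → Fin q` and `A^i` is the ordered product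
`A_{c 1} ⋯ A_{c s}`. -/
noncomputable def gnewtonE {m q : ℕ} (A : Fin q → Matrix (Fin m) (Fin m) ℝ)
    (u : Fin q → ℕ) : Matrix (Fin m) (Fin m) ℝ :=
  ∑ s ∈ Finset.range ((∑ α, u α) + 1),
    ∑ c : Fin s → Fin q,
      ((-1 : ℝ) ^ s *
        msigmaZ A (fun α => (u α : ℤ) - rowCount c α)) •
          (List.ofFn fun j => A (c j)).prod

set_option maxHeartbeats 1000000

-- helpers

lemma rowCount_cons {q s : ℕ} (α : Fin q) (c : Fin s → Fin q) (β : Fin q) :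
    rowCount (Fin.cons α c : Fin (s+1) → Fin q) β = (if α = β then 1 else 0) + rowCount c β := by
  simp only [rowCount, Finset.card_filter, Fin.sum_univ_succ, Fin.cons_zero, Fin.cons_succ]

lemma rowCount_snoc {q s : ℕ} (α : Fin q) (c : Fin s → Fin q) (β : Fin q) :
    rowCount (Fin.snoc c α : Fin (s+1) → Fin q) β = rowCount c β + (if α = β then 1 else 0) := by
  simp only [rowCount, Finset.card_filter, Fin.sum_univ_castSucc, Fin.snoc_castSucc,
    Fin.snoc_last]

lemma rowCount_zero {q : ℕ} (c : Fin 0 → Fin q) (β : Fin q) : rowCount c β = 0 := by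
  simp [rowCount]

lemma msigmaZ_coe {m q : ℕ} (A : Fin q → Matrix (Fin m) (Fin m) ℝ) (u : Fin q → ℕ) :
    msigmaZ A (fun α => (u α : ℤ)) = msigma A u := by
  simp [msigmaZ]

lemma msigmaZ_neg {m q : ℕ} (A : Fin q → Matrix (Fin m) (Fin m) ℝ) (v : Fin q → ℤ)
    (α : Fin q) (h : v α < 0) : msigmaZ A v = 0 := by
  rw [msigmaZ, if_neg]
  push_neg
  exact ⟨α, h⟩

lemma sum_pi_cons {q s : ℕ} {M : Type*} [AddCommMonoid M] (f : (Fin (s+1) → Fin q) → M) :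
    ∑ c : Fin (s+1) → Fin q, f c
      = ∑ α : Fin q, ∑ c : Fin s → Fin q, f (Fin.cons α c : Fin (s+1) → Fin q) := by
  rw [← Equiv.sum_comp (Fin.consEquiv fun _ => Fin q) f, Fintype.sum_prod_type]
  rfl

lemma sum_pi_snoc {q s : ℕ} {M : Type*} [AddCommMonoid M] (f : (Fin (s+1) → Fin q) → M) :
    ∑ c : Fin (s+1) → Fin q, f c
      = ∑ α : Fin q, ∑ c : Fin s → Fin q, f (Fin.snoc c α : Fin (s+1) → Fin q) := by
  rw [← Equiv.sum_comp (Fin.snocEquiv fun _ => Fin q) f, Fintype.sum_prod_type]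
  rfl

lemma sum_update_pred {q : ℕ} (u : Fin q → ℕ) (α : Fin q) (k : ℕ) (hk : u α = k + 1) :
    (∑ β, Function.update u α k β) + 1 = ∑ β, u β := by
  classical
  rw [Finset.sum_update_of_mem (Finset.mem_univ α)]
  rw [← Finset.sum_erase_add _ _ (Finset.mem_univ α), hk]
  rw [Finset.sdiff_singleton_eq_erase]
  ring

/-- The explicitly defined generalized Newton transformations satisfy both recursions
`T_u = σ_u·id − Σ_α A_α ∘ T_(α_♭(u))` and `T_u = σ_u·id − Σ_α T_(α_♭(u)) ∘ A_α`
for `|u| ≥ 1` (terms whose multi-index has a negative entry vanish). -/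
theorem gnewtonE_recursions {m q : ℕ} (A : Fin q → Matrix (Fin m) (Fin m) ℝ)
    (u : Fin q → ℕ) (hu : 1 ≤ ∑ α, u α) :
    gnewtonE A u = msigma A u • (1 : Matrix (Fin m) (Fin m) ℝ) -
      ∑ α, (if u α = 0 then 0 else
        A α * gnewtonE A (Function.update u α (u α - 1))) ∧
    gnewtonE A u = msigma A u • (1 : Matrix (Fin m) (Fin m) ℝ) -
      ∑ α, (if u α = 0 then 0 else
        gnewtonE A (Function.update u α (u α - 1)) * A α) := by
  classical
  constructor
  · rw [gnewtonE, Finset.sum_range_succ']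
    have h0 : (∑ c : Fin 0 → Fin q,
        ((-1 : ℝ) ^ 0 * msigmaZ A (fun α => (u α : ℤ) - rowCount c α)) •
          (List.ofFn fun j => A (c j)).prod) = msigma A u • 1 := by
      simp [rowCount_zero, msigmaZ_coe]
    rw [h0]
    have hmain : (∑ s ∈ Finset.range (∑ α, u α), ∑ c : Fin (s+1) → Fin q,
        ((-1 : ℝ) ^ (s+1) * msigmaZ A (fun α => (u α : ℤ) - rowCount c α)) •
          (List.ofFn fun j => A (c j)).prod) =
        - ∑ α, (if u α = 0 then 0 else
          A α * gnewtonE A (Function.update u α (u α - 1))) := by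
      have hswap : ∀ s ∈ Finset.range (∑ α, u α),
          (∑ c : Fin (s+1) → Fin q,
            ((-1 : ℝ) ^ (s+1) * msigmaZ A (fun α => (u α : ℤ) - rowCount c α)) •
              (List.ofFn fun j => A (c j)).prod) =
          ∑ α : Fin q, ∑ c : Fin s → Fin q,
            ((-1 : ℝ) ^ (s+1) *
              msigmaZ A (fun β => (u β : ℤ) -
                rowCount (Fin.cons α c : Fin (s+1) → Fin q) β)) •
              (List.ofFn fun j => A ((Fin.cons α c : Fin (s+1) → Fin q) j)).prod :=
        fun s _ => sum_pi_cons _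
      rw [Finset.sum_congr rfl hswap, Finset.sum_comm, ← Finset.sum_neg_distrib]
      apply Finset.sum_congr rfl
      intro α _
      by_cases hα : u α = 0
      · rw [if_pos hα, neg_zero]
        apply Finset.sum_eq_zero
        intro s _
        apply Finset.sum_eq_zero
        intro c _
        have : msigmaZ A (fun β => (u β : ℤ) -
            rowCount (Fin.cons α c : Fin (s+1) → Fin q) β) = 0 := by
          apply msigmaZ_neg _ _ α
          rw [rowCount_cons, if_pos rfl, hα]
          push_cast
          omega
        rw [this, mul_zero, zero_smul]
      · rw [if_neg hα]
        obtain ⟨k, hk⟩ : ∃ k, u α = k + 1 := ⟨u α - 1, by omega⟩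
        have hupd : Function.update u α (u α - 1) = Function.update u α k := by
          rw [hk]; norm_num
        rw [hupd, gnewtonE, sum_update_pred u α k hk, Finset.mul_sum,
          ← Finset.sum_neg_distrib]
        apply Finset.sum_congr rfl
        intro s _
        rw [Finset.mul_sum, ← Finset.sum_neg_distrib]
        apply Finset.sum_congr rfl
        intro c _
        have hv : (fun β => (u β : ℤ) -
            rowCount (Fin.cons α c : Fin (s+1) → Fin q) β) =
            (fun β => ((Function.update u α k β : ℕ) : ℤ) - rowCount c β) := by
          funext β
          rw [rowCount_cons]
          by_cases hβ : β = α
          · subst hβ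
            rw [if_pos rfl, Function.update_self, hk]
            push_cast
            ring
          · rw [if_neg (fun h => hβ h.symm), Function.update_of_ne hβ]
            push_cast
            ring
        have hprod : (List.ofFn fun j => A ((Fin.cons α c : Fin (s+1) → Fin q) j)).prod =
            A α * (List.ofFn fun j => A (c j)).prod := by
          rw [List.ofFn_succ]
          simp [Fin.cons_zero, Fin.cons_succ]
        rw [hv, hprod, mul_smul_comm, ← neg_smul]
        congr 1
        ring
    rw [hmain, neg_add_eq_sub]
  · rw [gnewtonE, Finset.sum_range_succ']
    have h0 : (∑ c : Fin 0 → Fin q,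
        ((-1 : ℝ) ^ 0 * msigmaZ A (fun α => (u α : ℤ) - rowCount c α)) •
          (List.ofFn fun j => A (c j)).prod) = msigma A u • 1 := by
      simp [rowCount_zero, msigmaZ_coe]
    rw [h0]
    have hmain : (∑ s ∈ Finset.range (∑ α, u α), ∑ c : Fin (s+1) → Fin q,
        ((-1 : ℝ) ^ (s+1) * msigmaZ A (fun α => (u α : ℤ) - rowCount c α)) •
          (List.ofFn fun j => A (c j)).prod) =
        - ∑ α, (if u α = 0 then 0 else
          gnewtonE A (Function.update u α (u α - 1)) * A α) := by
      have hswap : ∀ s ∈ Finset.range (∑ α, u α),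
          (∑ c : Fin (s+1) → Fin q,
            ((-1 : ℝ) ^ (s+1) * msigmaZ A (fun α => (u α : ℤ) - rowCount c α)) •
              (List.ofFn fun j => A (c j)).prod) =
          ∑ α : Fin q, ∑ c : Fin s → Fin q,
            ((-1 : ℝ) ^ (s+1) *
              msigmaZ A (fun β => (u β : ℤ) -
                rowCount (Fin.snoc c α : Fin (s+1) → Fin q) β)) •
              (List.ofFn fun j => A ((Fin.snoc c α : Fin (s+1) → Fin q) j)).prod :=
        fun s _ => sum_pi_snoc _
      rw [Finset.sum_congr rfl hswap, Finset.sum_comm, ← Finset.sum_neg_distrib]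
      apply Finset.sum_congr rfl
      intro α _
      by_cases hα : u α = 0
      · rw [if_pos hα, neg_zero]
        apply Finset.sum_eq_zero
        intro s _
        apply Finset.sum_eq_zero
        intro c _
        have : msigmaZ A (fun β => (u β : ℤ) -
            rowCount (Fin.snoc c α : Fin (s+1) → Fin q) β) = 0 := by
          apply msigmaZ_neg _ _ α
          rw [rowCount_snoc, if_pos rfl, hα]
          push_cast
          omega
        rw [this, mul_zero, zero_smul]
      · rw [if_neg hα]
        obtain ⟨k, hk⟩ : ∃ k, u α = k + 1 := ⟨u α - 1, by omega⟩
        have hupd : Function.update u α (u α - 1) = Function.update u α k := by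
          rw [hk]; norm_num
        rw [hupd, gnewtonE, sum_update_pred u α k hk, Finset.sum_mul,
          ← Finset.sum_neg_distrib]
        apply Finset.sum_congr rfl
        intro s _
        rw [Finset.sum_mul, ← Finset.sum_neg_distrib]
        apply Finset.sum_congr rfl
        intro c _
        have hv : (fun β => (u β : ℤ) -
            rowCount (Fin.snoc c α : Fin (s+1) → Fin q) β) =
            (fun β => ((Function.update u α k β : ℕ) : ℤ) - rowCount c β) := by
          funext β
          rw [rowCount_snoc]
          by_cases hβ : β = α
          · subst hβ
            rw [if_pos rfl, Function.update_self, hk]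
            push_cast
            ring
          · rw [if_neg (fun h => hβ h.symm), Function.update_of_ne hβ]
            push_cast
            ring
        have hprod : (List.ofFn fun j => A ((Fin.snoc c α : Fin (s+1) → Fin q) j)).prod =
            (List.ofFn fun j => A (c j)).prod * A α := by
          rw [List.ofFn_succ']
          simp [Fin.snoc_castSucc, Fin.snoc_last, List.prod_concat]
        rw [hv, hprod, smul_mul_assoc, ← neg_smul]
        congr 1
        ring
    rw [hmain, neg_add_eq_sub]
end
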